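/- For all n ≥ 0 and r ≥ 1, the order-lowering recurrence (1/(1-u)) · (h^{(r)}_{n,λ}(x+1|u) - u · h^{(r)}_{n,λ}(x|u)) = h^{(r-1)}_{n,λ}(x|u) holds. -/

import Mathlib

open PowerSeries Finset

noncomputable section

/-- Degenerate falling factorial `(x|λ)_n = x(x-λ)⋯(x-(n-1)λ)`. -/
def degFall {K : Type*} [Ring K] (l x : K) : ℕ → K
  | 0 => 1
  | n + 1 => degFall l x n * (x - (n : K) * l)

/-- The formal power series `(1+λt)^{x/λ} := ∑_{m≥0} (x|λ)_m t^m/m!`. -/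
def binExp {K : Type*} [Field K] (l x : K) : PowerSeries K :=
  PowerSeries.mk fun n => degFall l x n / (n.factorial : K)

/-- Degenerate Frobenius–Euler polynomials `h_{n,λ}(x|u)`, defined by
`(1-u)/((1+λt)^{1/λ} - u) · (1+λt)^{x/λ} = ∑ h_{n,λ}(x|u) tⁿ/n!`. -/
def dFE {K : Type*} [Field K] (l u x : K) (n : ℕ) : K :=
  (n.factorial : K) * PowerSeries.coeff n
    ((PowerSeries.C (1 - u)) * (binExp l 1 - PowerSeries.C u)⁻¹ * binExp l x)

/-- Degenerate Frobenius–Euler polynomials of order `r`. -/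
def dFEr {K : Type*} [Field K] (r : ℕ) (l u x : K) (n : ℕ) : K :=
  (n.factorial : K) * PowerSeries.coeff n
    (((PowerSeries.C (1 - u)) * (binExp l 1 - PowerSeries.C u)⁻¹) ^ r * binExp l x)

/-- The exponential series `e^{xt} = ∑ xⁿ tⁿ/n!`. -/
def expX {K : Type*} [Field K] (x : K) : PowerSeries K :=
  PowerSeries.mk fun n => x ^ n / (n.factorial : K)

/-- Higher-order Frobenius–Euler polynomials `H^{(r)}_n(x|u)`, defined by
`((1-u)/(e^t-u))^r e^{xt} = ∑ H^{(r)}_n(x|u) tⁿ/n!`. -/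
def FEr {K : Type*} [Field K] (r : ℕ) (u x : K) (n : ℕ) : K :=
  (n.factorial : K) * PowerSeries.coeff n
    (((PowerSeries.C (1 - u)) * (expX (1 : K) - PowerSeries.C u)⁻¹) ^ r * expX x)

/-- Signed Stirling numbers of the first kind: `(x)_n = ∑ S₁(n,l) x^l`. -/
def S1 : ℕ → ℕ → ℤ
  | 0, 0 => 1
  | 0, _ + 1 => 0
  | n + 1, 0 => -(n : ℤ) * S1 n 0
  | n + 1, k + 1 => S1 n k - (n : ℤ) * S1 n (k + 1)

/-- Stirling numbers of the second kind: `xⁿ = ∑ S₂(n,l) (x)_l`. -/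
def S2 : ℕ → ℕ → ℤ
  | 0, 0 => 1
  | 0, _ + 1 => 0
  | _ + 1, 0 => 0
  | n + 1, k + 1 => S2 n k + ((k : ℤ) + 1) * S2 n (k + 1)

/-! The series `(1+λt)^{x/λ}` is multiplicative in `x`, by the Vandermonde identity for degenerate
falling factorials. Hence `(1+λt)^{(x+1)/λ} - u (1+λt)^{x/λ} = ((1+λt)^{1/λ} - u) (1+λt)^{x/λ}`,
and the factor `(1+λt)^{1/λ} - u` cancels one power of the denominator of the generating function. -/

theorem degFall_add {K : Type*} [CommRing K] (l x y : K) (n : ℕ) :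
    degFall l (x + y) n
      = ∑ p ∈ antidiagonal n, (n.choose p.1 : K) * (degFall l x p.1 * degFall l y p.2) := by
  induction n with
  | zero => simp [degFall]
  | succ n ih =>
    rw [sum_antidiagonal_choose_succ_mul (fun i j => degFall l x i * degFall l y j), degFall, ih,
      sum_mul, ← sum_add_distrib]
    refine sum_congr rfl fun p hp => ?_
    have hn : (n : K) = p.1 + p.2 := by rw [← mem_antidiagonal.mp hp, Nat.cast_add]
    rw [Nat.choose_symm_of_eq_add (mem_antidiagonal.mp hp).symm, degFall, degFall, hn]
    ring

theorem mk_div_factorial_mul_mk_div_factorial {K : Type*} [Field K] [CharZero K]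
    (a b : ℕ → K) :
    mk (fun n => a n / n.factorial) * mk (fun n => b n / n.factorial)
      = mk fun n => (∑ p ∈ antidiagonal n, (n.choose p.1 : K) * (a p.1 * b p.2)) / n.factorial := by
  ext n
  rw [coeff_mul, coeff_mk, sum_div]
  refine sum_congr rfl fun p hp => ?_
  obtain rfl := mem_antidiagonal.mp hp
  have hfac : ((p.1 + p.2).choose p.1 : K) * p.1.factorial * p.2.factorial
      = (p.1 + p.2).factorial := by
    rw [Nat.choose_symm_add]; exact_mod_cast Nat.add_choose_mul_factorial_mul_factorial p.1 p.2
  have hchoose : ((p.1 + p.2).choose p.1 : K) ≠ 0 :=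
    Nat.cast_ne_zero.mpr (Nat.choose_pos (Nat.le_add_right _ _)).ne'
  simp only [coeff_mk]
  rw [← hfac]
  field_simp

theorem binExp_mul {K : Type*} [Field K] [CharZero K] (l x y : K) :
    binExp l x * binExp l y = binExp l (x + y) := by
  simp only [binExp, mk_div_factorial_mul_mk_div_factorial, degFall_add]

theorem constantCoeff_binExp {K : Type*} [Field K] (l x : K) :
    constantCoeff (binExp l x) = 1 := by
  simp [binExp, degFall]

theorem stmt10 {K : Type*} [Field K] [CharZero K] (l u x : K) (hu : u ≠ 1) (r : ℕ)
    (hr : 1 ≤ r) (n : ℕ) :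
    (1 / (1 - u)) * (dFEr r l u (x + 1) n - u * dFEr r l u x n) = dFEr (r - 1) l u x n := by
  obtain ⟨s, rfl⟩ : ∃ s, r = s + 1 := ⟨r - 1, (Nat.sub_add_cancel hr).symm⟩
  have h1u : (1 : K) - u ≠ 0 := sub_ne_zero.mpr hu.symm
  set B := binExp l 1 - C u
  set A := C (1 - u) * B⁻¹
  have hAB : A * B = C (1 - u) := by
    have hB : constantCoeff B ≠ 0 := by simpa [B, constantCoeff_binExp] using h1u
    rw [mul_assoc, PowerSeries.inv_mul_cancel B hB, mul_one]
  have hseries : A ^ (s + 1) * binExp l (x + 1) - C u * (A ^ (s + 1) * binExp l x)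
      = C (1 - u) * (A ^ s * binExp l x) := by
    rw [← binExp_mul, ← hAB]
    ring
  have hcoeff := congrArg (coeff n) hseries
  rw [map_sub, coeff_C_mul, coeff_C_mul] at hcoeff
  simp only [dFEr, Nat.add_sub_cancel]
  field_simp
  linear_combination (n.factorial : K) * hcoeff
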